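/- Let ψ be a convex Archimedean generator (convexity being required of generators of Archimedean copulas). Then the function G_H defined by G_H(x) = ψ(−log H(x)) (with the convention G_H(x) = 0 where H(x) = 0) is a GEV distribution function for every GEV distribution function H if and only if there exist c > 0 and θ ≥ 1 such that ψ(t) = exp(−(ct)^{1/θ}) for all t ≥ 0. -/

import Mathlib

open Filter Set Topology

/-- The generalized extreme value (GEV) distribution function `H_{ξ,μ,σ}`. -/
noncomputable def GEVcdf (ξ μ σ : ℝ) : ℝ → ℝ := fun x =>
  if ξ = 0 then Real.exp (-Real.exp (-(x - μ) / σ))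
  else if 0 < 1 + ξ * (x - μ) / σ then Real.exp (-(1 + ξ * (x - μ) / σ) ^ (-1 / ξ))
  else if 0 < ξ then 0 else 1

/-- A distribution function is GEV if it equals some `H_{ξ,μ,σ}` with `σ > 0`. -/
def IsGEV (H : ℝ → ℝ) : Prop := ∃ ξ μ σ : ℝ, 0 < σ ∧ H = GEVcdf ξ μ σ

/-- A distribution function on `ℝ`: nondecreasing, right-continuous, with limits 0 at `-∞`
and 1 at `∞`, taking values in `[0,1]`. -/
def IsDistFun (F : ℝ → ℝ) : Prop :=
  Monotone F ∧ (∀ x, ContinuousWithinAt F (Ici x) x) ∧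
    Tendsto F atBot (nhds 0) ∧ Tendsto F atTop (nhds 1) ∧ ∀ x, F x ∈ Icc (0:ℝ) 1

/-- The properties of the diagonal `u ↦ C_n(u,…,u)` of an `n`-dimensional copula. -/
def IsCopulaDiagonal (n : ℕ) (δ : ℝ → ℝ) : Prop :=
  δ 0 = 0 ∧ δ 1 = 1 ∧ MonotoneOn δ (Icc 0 1) ∧ (∀ u ∈ Icc (0:ℝ) 1, δ u ≤ u) ∧
    ∀ u ∈ Icc (0:ℝ) 1, ∀ v ∈ Icc (0:ℝ) 1, |δ u - δ v| ≤ (n : ℝ) * |u - v|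

/-- A distribution function on `[0,1]`: nondecreasing, right-continuous, `D(0)=0`, `D(1)=1`,
with values in `[0,1]`. -/
def IsDistFun01 (D : ℝ → ℝ) : Prop :=
  D 0 = 0 ∧ D 1 = 1 ∧ MonotoneOn D (Icc 0 1) ∧
    (∀ u ∈ Ico (0:ℝ) 1, ContinuousWithinAt D (Icc u 1) u) ∧
    ∀ u ∈ Icc (0:ℝ) 1, D u ∈ Icc (0:ℝ) 1

/-- A degenerate distribution function `x ↦ 1_{[a,∞)}(x)`. -/
noncomputable def IsDegenerateDF (G : ℝ → ℝ) : Prop :=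
  ∃ a : ℝ, ∀ x, G x = if a ≤ x then 1 else 0

/-- An Archimedean generator: continuous on `[0,∞)`, `ψ(0)=1`, values in `[0,1]`,
`ψ(t) → 0` as `t → ∞`, strictly decreasing on `[0, inf{x : ψ(x)=0}]` (equivalently,
strictly decreasing as long as it is positive). -/
def IsArchimedeanGenerator (ψ : ℝ → ℝ) : Prop :=
  ContinuousOn ψ (Ici 0) ∧ ψ 0 = 1 ∧ (∀ t ∈ Ici (0:ℝ), ψ t ∈ Icc (0:ℝ) 1) ∧
    Tendsto ψ atTop (nhds 0) ∧
    ∀ s t : ℝ, 0 ≤ s → s < t → 0 < ψ s → ψ t < ψ s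

/-!
Write `G_H = ψ(-log H)`. For the Weibull law `H(x) = exp(-(1 - x))` (`x ≤ 1`) one gets
`G_H(x) = ψ(1 - x)`, which reaches `1` at `x = 1`; a GEV law taking the value `1` has `ξ < 0`
and then never vanishes, so `ψ > 0`. For the Gumbel law `G_H(x) = ψ(exp(-x))` therefore stays
strictly inside `(0, 1)`, which only a Gumbel law does: `ψ(exp(-x)) = exp(-exp(-(x - μ)/σ))`,
i.e. `ψ(t) = exp(-(e^μ t)^(1/σ))`, and convexity at `0` excludes `1/σ > 1`. Conversely, for such
`ψ` the transform of a GEV law with tail `T(x) = -log H(x)` is `exp(-(c T(x))^(1/θ))`, which is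
again GEV, with shape `ξθ`.
-/

open Real

section GEV

variable {ξ μ σ x : ℝ}

lemma GEVcdf_zero (μ σ x : ℝ) : GEVcdf 0 μ σ x = exp (-exp (-(x - μ) / σ)) := by
  simp [GEVcdf]

lemma GEVcdf_of_pos (hξ : ξ ≠ 0) (hx : 0 < 1 + ξ * (x - μ) / σ) :
    GEVcdf ξ μ σ x = exp (-(1 + ξ * (x - μ) / σ) ^ (-1 / ξ)) := by
  simp only [GEVcdf, if_neg hξ, if_pos hx]

lemma GEVcdf_of_nonpos (hξ : ξ ≠ 0) (hx : ¬ 0 < 1 + ξ * (x - μ) / σ) :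
    GEVcdf ξ μ σ x = if 0 < ξ then 0 else 1 := by
  simp only [GEVcdf, if_neg hξ, if_neg hx]

lemma pos_of_GEVcdf_eq_zero (h : GEVcdf ξ μ σ x = 0) : 0 < ξ := by
  unfold GEVcdf at h
  split_ifs at h with h₀ h₁ h₂
  · exact absurd h (exp_ne_zero _)
  · exact absurd h (exp_ne_zero _)
  · exact h₂
  · exact absurd h one_ne_zero

lemma neg_of_GEVcdf_eq_one (h : GEVcdf ξ μ σ x = 1) : ξ < 0 := by
  unfold GEVcdf at h
  split_ifs at h with h₀ h₁ h₂
  · exact absurd h (exp_lt_one_iff.2 (neg_neg_of_pos (exp_pos _))).ne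
  · exact absurd h (exp_lt_one_iff.2 (neg_neg_of_pos (rpow_pos_of_pos h₁ _))).ne
  · exact absurd h zero_ne_one
  · exact lt_of_le_of_ne (not_lt.1 h₂) h₀

lemma eq_zero_of_forall_GEVcdf_mem_Ioo (hσ : σ ≠ 0) (h : ∀ x, GEVcdf ξ μ σ x ∈ Ioo 0 1) :
    ξ = 0 := by
  by_contra hξ
  have hx₀ : ¬ 0 < 1 + ξ * (μ - σ / ξ - μ) / σ := by
    field_simp
    simp
  have := h (μ - σ / ξ)
  rw [GEVcdf_of_nonpos hξ hx₀] at this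
  split_ifs at this <;> simp at this

end GEV

/-- The paper's `G_H(x) = ψ(-log H(x))`. -/
noncomputable def archimedeanTransform (ψ H : ℝ → ℝ) : ℝ → ℝ :=
  fun x => if H x = 0 then 0 else ψ (-log (H x))

lemma archimedeanTransform_of_eq_exp_neg {ψ H : ℝ → ℝ} {x T : ℝ} (h : H x = exp (-T)) :
    archimedeanTransform ψ H x = ψ T := by
  simp [archimedeanTransform, h, exp_ne_zero]

lemma GEVcdf_gumbel (x : ℝ) : GEVcdf 0 0 1 x = exp (-exp (-x)) := by
  simp [GEVcdf_zero]

lemma GEVcdf_weibull {x : ℝ} (hx : x ≤ 1) : GEVcdf (-1) 0 1 x = exp (-(1 - x)) := by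
  rcases hx.lt_or_eq with hx | rfl
  · rw [GEVcdf_of_pos (by norm_num) (by linarith)]
    norm_num
    ring
  · rw [GEVcdf_of_nonpos (by norm_num) (by norm_num)]
    norm_num

namespace IsArchimedeanGenerator

variable {ψ : ℝ → ℝ} (hψ : IsArchimedeanGenerator ψ)
include hψ

lemma lt_one {t : ℝ} (ht : 0 < t) : ψ t < 1 :=
  hψ.2.1 ▸ hψ.2.2.2.2 0 t le_rfl ht (hψ.2.1 ▸ one_pos)

lemma pos_of_isGEV_weibull (hW : IsGEV (archimedeanTransform ψ (GEVcdf (-1) 0 1)))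
    {t : ℝ} (ht : 0 ≤ t) : 0 < ψ t := by
  obtain ⟨ξ, μ, σ, -, hG⟩ := hW
  have hG1 : GEVcdf ξ μ σ 1 = 1 := by
    rw [← hG, archimedeanTransform_of_eq_exp_neg (T := 0) (by simpa using GEVcdf_weibull le_rfl),
      hψ.2.1]
  have hGt : GEVcdf ξ μ σ (1 - t) = ψ t := by
    rw [← hG, archimedeanTransform_of_eq_exp_neg (T := t)
      (by simpa using GEVcdf_weibull (x := 1 - t) (by linarith))]
  refine (hψ.2.2.1 t ht).1.lt_of_ne fun h0 => ?_
  exact (neg_of_GEVcdf_eq_one hG1).not_gt (pos_of_GEVcdf_eq_zero (hGt.trans h0.symm))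

lemma exists_eq_exp_neg_rpow (hW : IsGEV (archimedeanTransform ψ (GEVcdf (-1) 0 1)))
    (hG : IsGEV (archimedeanTransform ψ (GEVcdf 0 0 1))) :
    ∃ c σ : ℝ, 0 < c ∧ 0 < σ ∧ ∀ t : ℝ, 0 ≤ t → ψ t = exp (-((c * t) ^ (1 / σ))) := by
  obtain ⟨ξ, μ, σ, hσ, hG⟩ := hG
  have hψexp : ∀ x, ψ (exp (-x)) = GEVcdf ξ μ σ x := fun x => by
    rw [← hG, archimedeanTransform_of_eq_exp_neg (GEVcdf_gumbel x)]
  have hξ : ξ = 0 := eq_zero_of_forall_GEVcdf_mem_Ioo hσ.ne' fun x =>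
    hψexp x ▸ show ψ (exp (-x)) ∈ Ioo 0 1 from
      ⟨hψ.pos_of_isGEV_weibull hW (exp_pos _).le, hψ.lt_one (exp_pos _)⟩
  subst hξ
  refine ⟨exp μ, σ, exp_pos μ, hσ, fun t ht => ?_⟩
  rcases ht.lt_or_eq with ht | rfl
  · rw [← exp_log ht, ← neg_neg (log t), hψexp, GEVcdf_zero, ← exp_add, ← exp_mul]
    congr 3
    ring
  · simp [hψ.2.1, zero_rpow (inv_pos.2 hσ).ne']

end IsArchimedeanGenerator

lemma le_one_of_convexOn_exp_neg_rpow {c α : ℝ} (hc : 0 < c)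
    (hconv : ConvexOn ℝ (Ici 0) fun t => exp (-((c * t) ^ α))) : α ≤ 1 := by
  by_contra! hα
  set f : ℝ → ℝ := fun t => exp (-((c * t) ^ α))
  have hf0 : f 0 = 1 := by simp [f, zero_rpow (by linarith : α ≠ 0)]
  -- the secant slope `(1 - f t) / t` decreases in `t`, but is `O(t ^ (α - 1))` near `0`
  have hslope : ∀ t ∈ Ioc (0 : ℝ) 1, 1 - f 1 ≤ c ^ α * t ^ (α - 1) := fun t ⟨ht0, ht1⟩ => by
    have hsec := hconv.secant_mono (a := 0) self_mem_Ici ht0.le (mem_Ici.2 zero_le_one)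
      ht0.ne' one_ne_zero ht1
    have hbound : 1 - f t ≤ (c * t) ^ α := by
      linarith [add_one_le_exp (-((c * t) ^ α))]
    rw [hf0, sub_zero, sub_zero, div_one] at hsec
    calc 1 - f 1 ≤ (1 - f t) / t := by rw [← neg_sub (f t), neg_div]; linarith
      _ ≤ (c * t) ^ α / t := by gcongr
      _ = c ^ α * t ^ (α - 1) := by
        rw [mul_rpow hc.le ht0.le, rpow_sub_one ht0.ne', mul_div_assoc]
  have hsmall : Tendsto (fun t : ℝ => c ^ α * t ^ (α - 1)) (𝓝[>] 0) (𝓝 0) := by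
    have := ((continuousAt_rpow_const 0 (α - 1) (Or.inr (by linarith))).tendsto.const_mul (c ^ α))
    simpa [zero_rpow (by linarith : α - 1 ≠ 0)] using this.mono_left nhdsWithin_le_nhds
  have hf1 : 0 < 1 - f 1 := by
    simp only [f, mul_one, sub_pos, exp_lt_one_iff, neg_lt_zero]
    positivity
  obtain ⟨t, hlt, ht⟩ :=
    ((hsmall.eventually (gt_mem_nhds hf1)).and (Ioc_mem_nhdsGT zero_lt_one)).exists
  exact (hslope t ht).not_gt hlt

section

variable {ψ : ℝ → ℝ} {c θ : ℝ} (hc : 0 < c) (hθ : 0 < θ)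
  (hψ : ∀ t : ℝ, 0 ≤ t → ψ t = exp (-((c * t) ^ (1 / θ))))
include hc hθ hψ

lemma archimedeanTransform_GEVcdf_zero {μ σ : ℝ} (hσ : σ ≠ 0) :
    archimedeanTransform ψ (GEVcdf 0 μ σ) = GEVcdf 0 (μ + σ * log c) (σ * θ) := by
  funext x
  rw [archimedeanTransform_of_eq_exp_neg (GEVcdf_zero μ σ x), hψ _ (exp_pos _).le, GEVcdf_zero,
    ← exp_log hc, ← exp_add, ← exp_mul, log_exp]
  congr 3
  field_simp
  ring

lemma archimedeanTransform_GEVcdf_of_ne_zero {ξ μ σ : ℝ} (hξ : ξ ≠ 0) (hσ : σ ≠ 0) :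
    archimedeanTransform ψ (GEVcdf ξ μ σ) =
      GEVcdf (ξ * θ) (μ + σ * (c ^ ξ - 1) / ξ) (σ * θ * c ^ ξ) := by
  funext x
  set P := c ^ ξ
  have hP : 0 < P := rpow_pos_of_pos hc ξ
  have hξθ : ξ * θ ≠ 0 := mul_ne_zero hξ hθ.ne'
  have hB : 1 + ξ * θ * (x - (μ + σ * (P - 1) / ξ)) / (σ * θ * P) = (1 + ξ * (x - μ) / σ) / P := by
    field_simp
    ring
  by_cases hx : 0 < 1 + ξ * (x - μ) / σ
  · rw [archimedeanTransform_of_eq_exp_neg (GEVcdf_of_pos hξ hx), hψ _ (rpow_nonneg hx.le _),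
      GEVcdf_of_pos hξθ (hB ▸ div_pos hx hP), hB, div_rpow hx.le hP.le, ← rpow_mul hc.le,
      mul_rpow hc.le (rpow_nonneg hx.le _), ← rpow_mul hx.le,
      show ξ * (-1 / (ξ * θ)) = -(1 / θ) by field_simp, rpow_neg hc.le, div_inv_eq_mul, mul_comm]
    congr 4
    field_simp
  · rw [GEVcdf_of_nonpos hξθ (hB ▸ (div_pos_iff_of_pos_right hP).not.2 hx)]
    unfold archimedeanTransform
    rw [GEVcdf_of_nonpos hξ hx]
    rcases hξ.lt_or_gt with hneg | hpos
    · simp [hneg.not_gt, (mul_neg_of_neg_of_pos hneg hθ).not_gt, hψ 0 le_rfl,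
        zero_rpow (inv_pos.2 hθ).ne']
    · simp [hpos, mul_pos hpos hθ]

lemma isGEV_archimedeanTransform {H : ℝ → ℝ} (hH : IsGEV H) : IsGEV (archimedeanTransform ψ H) := by
  obtain ⟨ξ, μ, σ, hσ, rfl⟩ := hH
  rcases eq_or_ne ξ 0 with rfl | hξ
  · exact ⟨_, _, _, by positivity, archimedeanTransform_GEVcdf_zero hc hθ hψ hσ.ne'⟩
  · exact ⟨_, _, _, by positivity, archimedeanTransform_GEVcdf_of_ne_zero hc hθ hψ hξ hσ.ne'⟩

end

/-- Lemma: `ψ(−log H)` is GEV for every GEV `H` iff `ψ(t) = exp(−(ct)^{1/θ})`. -/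
theorem archimedean_GEV_limit_characterization
    (ψ : ℝ → ℝ)
    (hψ : IsArchimedeanGenerator ψ) (hψconvex : ConvexOn ℝ (Ici 0) ψ) :
    (∀ H : ℝ → ℝ, IsGEV H →
      IsGEV (fun x => if H x = 0 then 0 else ψ (-Real.log (H x)))) ↔
    ∃ c θ : ℝ, 0 < c ∧ 1 ≤ θ ∧ ∀ t : ℝ, 0 ≤ t → ψ t = Real.exp (-((c * t) ^ (1 / θ))) := by
  constructor
  · intro h
    obtain ⟨c, θ, hc, hθ, hform⟩ :=
      hψ.exists_eq_exp_neg_rpow (h _ ⟨-1, 0, 1, one_pos, rfl⟩) (h _ ⟨0, 0, 1, one_pos, rfl⟩)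
    have hconv := le_one_of_convexOn_exp_neg_rpow hc (hψconvex.congr hform)
    exact ⟨c, θ, hc, (div_le_one hθ).1 hconv, hform⟩
  · rintro ⟨c, θ, hc, hθ, hform⟩ H hH
    exact isGEV_archimedeanTransform hc (by linarith) hform hH
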